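/- arXiv:2305.11716 — 3 statements merged into one kernel-verified Lean document; each statement's English description precedes it below -/
import Mathlib

section
/- Let d^c ∈ ℝ² with ‖d^c‖ ≤ π/2 and σ ≥ 0, and let d ∈ ℝ² with ‖d‖ ≤ π/2 satisfy |d₁ − d^c₁| ≤ σ and |d₂ − d^c₂| ≤ σ (i.e., d lies in the square sub-branch with center d^c and half-side length σ). Then ∠(r(d), r(d^c)) ≤ ‖d − d^c‖ ≤ √2·σ, where r(·) is the exponential mapping. -/
open scoped RealInnerProductSpace

open Real Set

lemma aux_sin_sub_mul_cos_nonneg {x : ℝ} (hx : x ∈ Icc 0 π) :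
    0 ≤ Real.sin x - x * Real.cos x := by
  have h : MonotoneOn (fun x => Real.sin x - x * Real.cos x) (Icc 0 π) := by
    apply monotoneOn_of_deriv_nonneg (convex_Icc 0 π)
    · fun_prop
    · apply Differentiable.differentiableOn; fun_prop
    · intro y hy
      rw [interior_Icc] at hy
      have hder : HasDerivAt (fun x => Real.sin x - x * Real.cos x) (y * Real.sin y) y := by
        have : HasDerivAt (fun x => Real.sin x - x * Real.cos x) _ y := (Real.hasDerivAt_sin y).sub
          ((hasDerivAt_id y).mul (Real.hasDerivAt_cos y))
        convert this using 1
        simp only [id_eq]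
        ring
      rw [hder.deriv]
      exact mul_nonneg hy.1.le (Real.sin_nonneg_of_nonneg_of_le_pi hy.1.le hy.2.le)
  have := h (left_mem_Icc.2 Real.pi_nonneg) hx hx.1
  simpa using this

lemma aux_sinc_anti : AntitoneOn (fun x => Real.sin x / x) (Ioc 0 π) := by
  apply antitoneOn_of_deriv_nonpos (convex_Ioc 0 π)
  · apply ContinuousOn.div Real.continuous_sin.continuousOn continuousOn_id
    intro x hx; exact hx.1.ne'
  · intro x hx
    rw [interior_Ioc] at hx
    exact ((Real.differentiable_sin.differentiableAt).div differentiableAt_id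
      hx.1.ne').differentiableWithinAt
  · intro x hx
    rw [interior_Ioc] at hx
    have hder : HasDerivAt (fun x => Real.sin x / x) ((Real.cos x * x - Real.sin x * 1) / x ^ 2) x :=
      (Real.hasDerivAt_sin x).div (hasDerivAt_id x) hx.1.ne'
    rw [hder.deriv]
    apply div_nonpos_of_nonpos_of_nonneg _ (sq_nonneg x)
    have := aux_sin_sub_mul_cos_nonneg (x := x) ⟨hx.1.le, hx.2.le⟩
    nlinarith

lemma aux_convexOn_cos_sqrt : ConvexOn ℝ (Icc 0 (π ^ 2)) (fun x => Real.cos (Real.sqrt x)) := by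
  apply MonotoneOn.convexOn_of_deriv (convex_Icc _ _)
  · exact (Real.continuous_cos.comp Real.continuous_sqrt).continuousOn
  · rw [interior_Icc]
    intro x hx
    exact (((Real.hasDerivAt_sqrt hx.1.ne').cos)).differentiableAt.differentiableWithinAt
  · rw [interior_Icc]
    have hderiv : ∀ x ∈ Ioo 0 (π ^ 2),
        deriv (fun x => Real.cos (Real.sqrt x)) x = -(Real.sin (Real.sqrt x) / Real.sqrt x) / 2 := by
      intro x hx
      have h := (Real.hasDerivAt_sqrt hx.1.ne').cos
      rw [h.deriv]
      ring
    intro x hx y hy hxy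
    rw [hderiv x hx, hderiv y hy]
    have h1 : Real.sqrt x ∈ Ioc 0 π := by
      refine ⟨Real.sqrt_pos.2 hx.1, ?_⟩
      rw [show π = Real.sqrt (π ^ 2) by rw [Real.sqrt_sq Real.pi_nonneg]]
      exact Real.sqrt_le_sqrt hx.2.le
    have h2 : Real.sqrt y ∈ Ioc 0 π := by
      refine ⟨Real.sqrt_pos.2 hy.1, ?_⟩
      rw [show π = Real.sqrt (π ^ 2) by rw [Real.sqrt_sq Real.pi_nonneg]]
      exact Real.sqrt_le_sqrt hy.2.le
    have := aux_sinc_anti h1 h2 (Real.sqrt_le_sqrt hxy)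
    simp only at this
    linarith

lemma aux_key {a b w : ℝ} (ha0 : 0 < a) (hb0 : 0 < b) (ha : a ≤ π / 2) (hb : b ≤ π / 2)
    (hw : |w| ≤ a * b) :
    Real.cos (Real.sqrt (a ^ 2 + b ^ 2 - 2 * w)) ≤
      Real.cos a * Real.cos b + Real.sin a * Real.sin b * (w / (a * b)) := by
  have hab : 0 < a * b := mul_pos ha0 hb0
  obtain ⟨hw1, hw2⟩ := abs_le.1 hw
  set t : ℝ := (a * b + w) / (2 * (a * b)) with ht
  have ht0 : 0 ≤ t := div_nonneg (by linarith) (by positivity)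
  have ht1 : t ≤ 1 := (div_le_one (by positivity)).2 (by linarith)
  have hX : (a - b) ^ 2 ∈ Icc 0 (π ^ 2) := by
    constructor
    · positivity
    · nlinarith [Real.pi_pos]
  have hY : (a + b) ^ 2 ∈ Icc 0 (π ^ 2) := by
    constructor
    · positivity
    · nlinarith [Real.pi_pos]
  have ht1' : (0:ℝ) ≤ 1 - t := by linarith
  have hsum : t + (1 - t) = 1 := by ring
  have hconv := aux_convexOn_cos_sqrt.2 hX hY ht0 ht1' hsum
  simp only [smul_eq_mul] at hconv
  have hcomb : t * (a - b) ^ 2 + (1 - t) * (a + b) ^ 2 = a ^ 2 + b ^ 2 - 2 * w := by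
    rw [ht]
    field_simp
    ring
  rw [hcomb] at hconv
  have e1 : Real.sqrt ((a - b) ^ 2) = |a - b| := Real.sqrt_sq_eq_abs _
  have e2 : Real.sqrt ((a + b) ^ 2) = a + b := Real.sqrt_sq (by linarith)
  rw [e1, e2, Real.cos_abs, Real.cos_sub, Real.cos_add] at hconv
  have h2t : 2 * t - 1 = w / (a * b) := by
    rw [ht]
    field_simp
    ring
  have e3 : t * (Real.cos a * Real.cos b + Real.sin a * Real.sin b) +
      (1 - t) * (Real.cos a * Real.cos b - Real.sin a * Real.sin b) =
      Real.cos a * Real.cos b + Real.sin a * Real.sin b * (w / (a * b)) := by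
    linear_combination Real.sin a * Real.sin b * h2t
  linarith


/-- The exponential mapping from the closed disk of radius `π/2` in `ℝ²`
to the upper unit hemisphere of `ℝ³`. -/
noncomputable def expMap (d : EuclideanSpace ℝ (Fin 2)) : EuclideanSpace ℝ (Fin 3) :=
  (WithLp.equiv 2 (Fin 3 → ℝ)).symm
    ![Real.sin ‖d‖ * (d 0 / ‖d‖), Real.sin ‖d‖ * (d 1 / ‖d‖), Real.cos ‖d‖]

lemma norm_sq_eq_two (d : EuclideanSpace ℝ (Fin 2)) : ‖d‖ ^ 2 = d 0 ^ 2 + d 1 ^ 2 := by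
  rw [EuclideanSpace.norm_eq, Real.sq_sqrt (by positivity)]
  simp [Fin.sum_univ_two, Real.norm_eq_abs, sq_abs]

lemma norm_expMap (d : EuclideanSpace ℝ (Fin 2)) : ‖expMap d‖ = 1 := by
  have hd2 := norm_sq_eq_two d
  rw [EuclideanSpace.norm_eq]
  rcases eq_or_ne d 0 with h | h
  · subst h
    simp [expMap, Fin.sum_univ_three, Real.norm_eq_abs, sq_abs]
  · have ha : ‖d‖ ≠ 0 := norm_ne_zero_iff.2 h
    have : ∑ i, ‖expMap d i‖ ^ 2 = 1 := by
      simp only [expMap, WithLp.equiv_symm_apply, PiLp.toLp_apply, Fin.sum_univ_three,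
        Matrix.cons_val_zero, Matrix.cons_val_one, Matrix.head_cons,
        Matrix.cons_val_two, Matrix.tail_cons, Real.norm_eq_abs, sq_abs]
      have hs := Real.sin_sq_add_cos_sq ‖d‖
      field_simp
      nlinarith [hd2, hs, sq_nonneg ‖d‖]
    rw [this, Real.sqrt_one]

lemma inner_expMap (d dc : EuclideanSpace ℝ (Fin 2)) :
    ⟪expMap d, expMap dc⟫ =
      Real.sin ‖d‖ * (d 0 / ‖d‖) * (Real.sin ‖dc‖ * (dc 0 / ‖dc‖)) +
      Real.sin ‖d‖ * (d 1 / ‖d‖) * (Real.sin ‖dc‖ * (dc 1 / ‖dc‖)) +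
      Real.cos ‖d‖ * Real.cos ‖dc‖ := by
  simp [expMap, PiLp.inner_apply, RCLike.inner_apply, conj_trivial, Fin.sum_univ_three,
    WithLp.equiv_symm_apply, PiLp.toLp_apply]
  ring

theorem angle_le_sqrt_two_mul_halfSide (dc : EuclideanSpace ℝ (Fin 2))
    (hdc : ‖dc‖ ≤ Real.pi / 2) (σ : ℝ) (hσ : 0 ≤ σ)
    (d : EuclideanSpace ℝ (Fin 2)) (hd : ‖d‖ ≤ Real.pi / 2)
    (h0 : |d 0 - dc 0| ≤ σ) (h1 : |d 1 - dc 1| ≤ σ) :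
    InnerProductGeometry.angle (expMap d) (expMap dc) ≤ ‖d - dc‖ ∧
      ‖d - dc‖ ≤ Real.sqrt 2 * σ := by
  constructor
  · -- angle part
    have hcpi : ‖d - dc‖ ≤ π := le_trans (norm_sub_le d dc) (by linarith)
    have hcos : Real.cos ‖d - dc‖ ≤ ⟪expMap d, expMap dc⟫ := by
      rcases eq_or_ne d 0 with h | h
      · subst h
        rw [inner_expMap, zero_sub, norm_neg]
        simp
      rcases eq_or_ne dc 0 with h' | h'
      · subst h'
        rw [inner_expMap, sub_zero]
        simp
      · have ha0 : (0:ℝ) < ‖d‖ := norm_pos_iff.2 h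
        have hb0 : (0:ℝ) < ‖dc‖ := norm_pos_iff.2 h'
        have hc : ‖d - dc‖ = Real.sqrt (‖d‖ ^ 2 + ‖dc‖ ^ 2 - 2 * ⟪d, dc⟫) := by
          rw [← Real.sqrt_sq (norm_nonneg (d - dc)), norm_sub_sq_real]
          ring_nf
        have hI : ⟪expMap d, expMap dc⟫ = Real.cos ‖d‖ * Real.cos ‖dc‖ +
            Real.sin ‖d‖ * Real.sin ‖dc‖ * (⟪d, dc⟫ / (‖d‖ * ‖dc‖)) := by
          rw [inner_expMap]
          have hw : ⟪d, dc⟫ = d 0 * dc 0 + d 1 * dc 1 := by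
            simp [PiLp.inner_apply, RCLike.inner_apply, conj_trivial, Fin.sum_univ_two]
            ring
          rw [hw]
          field_simp
          ring
        rw [hI, hc]
        exact aux_key ha0 hb0 hd hdc (abs_real_inner_le_norm d dc)
    rw [InnerProductGeometry.angle, norm_expMap, norm_expMap]
    calc Real.arccos (⟪expMap d, expMap dc⟫ / (1 * 1)) ≤ Real.arccos (Real.cos ‖d - dc‖) := by
          rw [Real.arccos, Real.arccos]
          have hcos' : Real.cos ‖d - dc‖ ≤ ⟪expMap d, expMap dc⟫ / (1 * 1) := by
            simpa using hcos
          have := Real.monotone_arcsin hcos'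
          linarith
      _ = ‖d - dc‖ := Real.arccos_cos (norm_nonneg _) hcpi
  · -- norm part
    have hc2 : ‖d - dc‖ ^ 2 = (d 0 - dc 0) ^ 2 + (d 1 - dc 1) ^ 2 := by
      have := norm_sq_eq_two (d - dc)
      simpa using this
    have hb0 : (d 0 - dc 0) ^ 2 ≤ σ ^ 2 := by
      rw [← sq_abs]; exact pow_le_pow_left₀ (abs_nonneg _) h0 2
    have hb1 : (d 1 - dc 1) ^ 2 ≤ σ ^ 2 := by
      rw [← sq_abs]; exact pow_le_pow_left₀ (abs_nonneg _) h1 2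
    have h2 : ‖d - dc‖ ^ 2 ≤ 2 * σ ^ 2 := by rw [hc2]; linarith
    calc ‖d - dc‖ = Real.sqrt (‖d - dc‖ ^ 2) := (Real.sqrt_sq (norm_nonneg _)).symm
      _ ≤ Real.sqrt (2 * σ ^ 2) := Real.sqrt_le_sqrt h2
      _ = Real.sqrt 2 * σ := by
          rw [Real.sqrt_mul (by norm_num), Real.sqrt_sq hσ]
end

section
/- (SPCR upper bound for S²⁺) Let {p_i}_{i∈I} be a finite family in ℝ³ and {q_k}_{k∈K} a finite family in ℝ, let ε ≥ 0, let r^c be a unit vector in ℝ³ and σ ≥ 0. For each i, k set θ_i = ∠(r^c, p_i), t_{ik}⁻ = −ε − ‖p_i‖·cos(max{θ_i − √2σ, 0}) + q_k and t_{ik}⁺ = ε − ‖p_i‖·cos(min{θ_i + √2σ, π}) + q_k. Then for every unit vector r with ∠(r, r^c) ≤ √2σ and every t ∈ ℝ, the number of indices i ∈ I such that |⟪r, p_i⟫ + t − q_k| ≤ ε for some k ∈ K is at most the number of indices i ∈ I such that t_{ik}⁻ ≤ t ≤ t_{ik}⁺ for some k ∈ K. -/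
/-!
By the triangle inequality for angles, `∠(r, p)` lies within `δ = √2σ` of `∠(r^c, p)`, clipped to
`[0, π]`. Since `cos` is antitone on `[0, π]`, `⟪r, p⟫ = ‖p‖ cos ∠(r, p)` lies between the two
clipped cosines scaled by `‖p‖`, so every inlier of `(r, t)` is an inlier of the relaxation.
-/

open InnerProductGeometry
open scoped RealInnerProductSpace

section AngleBounds

variable {V : Type*} [NormedAddCommGroup V] [InnerProductSpace ℝ V]

lemma cos_min_angle_add_le_cos_angle {x y z : V} {δ : ℝ} (h : angle y x ≤ δ) :
    Real.cos (min (angle x z + δ) Real.pi) ≤ Real.cos (angle y z) := by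
  have hyz : angle y z ≤ angle x z + δ := by
    linarith [angle_le_angle_add_angle y x z]
  exact Real.cos_le_cos_of_nonneg_of_le_pi (angle_nonneg y z) (min_le_right _ _)
    (le_min hyz (angle_le_pi y z))

lemma cos_angle_le_cos_max_angle_sub {x y z : V} {δ : ℝ} (h : angle y x ≤ δ) :
    Real.cos (angle y z) ≤ Real.cos (max (angle x z - δ) 0) := by
  have hxz : angle x z - δ ≤ angle y z := by
    linarith [angle_le_angle_add_angle x y z, angle_comm x y]
  exact Real.cos_le_cos_of_nonneg_of_le_pi (le_max_right _ _) (angle_le_pi y z)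
    (max_le hxz (angle_nonneg y z))

lemma inner_mem_Icc_of_angle_le {r c p : V} {δ : ℝ} (hr : ‖r‖ = 1) (h : angle r c ≤ δ) :
    ⟪r, p⟫ ∈ Set.Icc (‖p‖ * Real.cos (min (angle c p + δ) Real.pi))
      (‖p‖ * Real.cos (max (angle c p - δ) 0)) := by
  have hinner : ⟪r, p⟫ = ‖p‖ * Real.cos (angle r p) := by
    rw [← cos_angle_mul_norm_mul_norm, hr]
    ring
  rw [hinner]
  exact ⟨mul_le_mul_of_nonneg_left (cos_min_angle_add_le_cos_angle h) (norm_nonneg p),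
    mul_le_mul_of_nonneg_left (cos_angle_le_cos_max_angle_sub h) (norm_nonneg p)⟩

end AngleBounds

open Classical in
theorem spcr_upper_bound_upper_hemisphere_general {I K : Type*} [Fintype I] [Fintype K]
    (p : I → EuclideanSpace ℝ (Fin 3)) (q : K → ℝ) (ε : ℝ)
    (rc : EuclideanSpace ℝ (Fin 3)) (σ : ℝ) :
    ∀ r : EuclideanSpace ℝ (Fin 3), ‖r‖ = 1 → angle r rc ≤ Real.sqrt 2 * σ →
      ∀ t : ℝ,
        (Finset.univ.filter fun i => ∃ k : K, |⟪r, p i⟫ + t - q k| ≤ ε).card ≤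
          (Finset.univ.filter fun i => ∃ k : K,
            -ε - ‖p i‖ * Real.cos (max (angle rc (p i) - Real.sqrt 2 * σ) 0) + q k ≤ t ∧
            t ≤ ε - ‖p i‖ * Real.cos (min (angle rc (p i) + Real.sqrt 2 * σ) Real.pi) + q k).card := by
  intro r hr hangle t
  refine Finset.card_le_card (Finset.monotone_filter_right _ fun i _ ⟨k, hk⟩ => ⟨k, ?_⟩)
  obtain ⟨hlow, hupp⟩ := inner_mem_Icc_of_angle_le (p := p i) hr hangle
  obtain ⟨hk₁, hk₂⟩ := abs_le.mp hk
  constructor <;> linarith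

open Classical in
theorem spcr_upper_bound_upper_hemisphere {I K : Type*} [Fintype I] [Fintype K]
    (p : I → EuclideanSpace ℝ (Fin 3)) (q : K → ℝ) (ε : ℝ) (hε : 0 ≤ ε)
    (rc : EuclideanSpace ℝ (Fin 3)) (hrc : ‖rc‖ = 1) (σ : ℝ) (hσ : 0 ≤ σ) :
    ∀ r : EuclideanSpace ℝ (Fin 3), ‖r‖ = 1 → angle r rc ≤ Real.sqrt 2 * σ →
      ∀ t : ℝ,
        (Finset.univ.filter fun i => ∃ k : K, |⟪r, p i⟫ + t - q k| ≤ ε).card ≤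
          (Finset.univ.filter fun i => ∃ k : K,
            -ε - ‖p i‖ * Real.cos (max (angle rc (p i) - Real.sqrt 2 * σ) 0) + q k ≤ t ∧
            t ≤ ε - ‖p i‖ * Real.cos (min (angle rc (p i) + Real.sqrt 2 * σ) Real.pi) + q k).card :=
  spcr_upper_bound_upper_hemisphere_general p q ε rc σ
end

section
/- (SPCR upper bound for S²⁻) Let {p_i}_{i∈I} be a finite family in ℝ³ and {q_k}_{k∈K} a finite family in ℝ, let ε ≥ 0, let r^c be a unit vector in ℝ³ and σ ≥ 0. For each i, k set θ_i = ∠(r^c, p_i), s_{ik}⁻ = −ε + ‖p_i‖·cos(min{θ_i + √2σ, π}) + q_k and s_{ik}⁺ = ε + ‖p_i‖·cos(max{θ_i − √2σ, 0}) + q_k. Then for every unit vector r with ∠(r, r^c) ≤ √2σ and every t ∈ ℝ, the number of indices i ∈ I such that |⟪−r, p_i⟫ + t − q_k| ≤ ε for some k ∈ K is at most the number of indices i ∈ I such that s_{ik}⁻ ≤ t ≤ s_{ik}⁺ for some k ∈ K. -/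
open InnerProductGeometry
open scoped RealInnerProductSpace

section Aux

variable {V : Type*} [NormedAddCommGroup V] [InnerProductSpace ℝ V]

lemma angle_triangle_unit {x y z : V} (hx : ‖x‖ = 1) (hy : ‖y‖ = 1) (hz : ‖z‖ = 1) :
    angle x z ≤ angle x y + angle y z := by
  by_cases hπ : Real.pi ≤ angle x y + angle y z
  · exact (angle_le_pi x z).trans hπ
  push_neg at hπ
  set a : ℝ := ⟪x, y⟫ with ha
  set b : ℝ := ⟪y, z⟫ with hb
  have hcosa : Real.cos (angle x y) = a := by
    rw [cos_angle, hx, hy]; simp [ha]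
  have hcosb : Real.cos (angle y z) = b := by
    rw [cos_angle, hy, hz]; simp [hb]
  have hyy : ⟪y, y⟫ = 1 := by
    rw [real_inner_self_eq_norm_mul_norm, hy]; ring
  have hxx : ⟪x, x⟫ = 1 := by
    rw [real_inner_self_eq_norm_mul_norm, hx]; ring
  have hzz : ⟪z, z⟫ = 1 := by
    rw [real_inner_self_eq_norm_mul_norm, hz]; ring
  have hsina : Real.sin (angle x y) = Real.sqrt (1 - a * a) := by
    have := sin_angle_mul_norm_mul_norm x y
    rw [hx, hy, hxx, hyy] at this; simpa using this
  have hsinb : Real.sin (angle y z) = Real.sqrt (1 - b * b) := by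
    have := sin_angle_mul_norm_mul_norm y z
    rw [hy, hz, hyy, hzz] at this; simpa using this
  -- key inequality via orthogonal decomposition
  set u : V := x - a • y with hu
  set v : V := z - b • y with hv
  have huv : ⟪u, v⟫ = ⟪x, z⟫ - a * b := by
    simp [hu, hv, inner_sub_sub_self, inner_sub_left, inner_sub_right,
      real_inner_smul_left, real_inner_smul_right, hyy, real_inner_comm x y]
    rw [← ha, ← hb, hy]; ring
  have hnu : ‖u‖ = Real.sqrt (1 - a * a) := by
    rw [← Real.sqrt_sq (norm_nonneg u)]
    congr 1
    rw [← real_inner_self_eq_norm_sq]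
    simp [hu, inner_sub_left, inner_sub_right, real_inner_smul_left,
      real_inner_smul_right, hxx, hyy, real_inner_comm x y]
    rw [← real_inner_self_eq_norm_sq]
    simp only [inner_sub_left, inner_sub_right, real_inner_smul_left,
      real_inner_smul_right, hxx, hyy, real_inner_comm x y, ← ha]
    ring
  have hnv : ‖v‖ = Real.sqrt (1 - b * b) := by
    rw [← Real.sqrt_sq (norm_nonneg v)]
    congr 1
    rw [← real_inner_self_eq_norm_sq]
    simp [hv, inner_sub_left, inner_sub_right, real_inner_smul_left,
      real_inner_smul_right, hzz, hyy, real_inner_comm y z]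
    rw [← real_inner_self_eq_norm_sq]
    simp only [inner_sub_left, inner_sub_right, real_inner_smul_left,
      real_inner_smul_right, hzz, hyy, real_inner_comm y z, ← hb]
    ring
  have hcs : -(‖u‖ * ‖v‖) ≤ ⟪u, v⟫ := neg_le_of_abs_le (abs_real_inner_le_norm u v)
  have hkey : Real.cos (angle x y + angle y z) ≤ Real.cos (angle x z) := by
    rw [Real.cos_add, hcosa, hcosb, hsina, hsinb]
    have hcz : Real.cos (angle x z) = ⟪x, z⟫ := by
      rw [cos_angle, hx, hz]; simp
    rw [hcz]
    rw [huv, hnu, hnv] at hcs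
    linarith
  have h1 : angle x z ∈ Set.Icc 0 Real.pi := ⟨angle_nonneg x z, angle_le_pi x z⟩
  have h2 : angle x y + angle y z ∈ Set.Icc 0 Real.pi :=
    ⟨add_nonneg (angle_nonneg x y) (angle_nonneg y z), le_of_lt hπ⟩
  exact (Real.strictAntiOn_cos.le_iff_ge h2 h1).mp hkey

lemma angle_triangle_aux {x y : V} (hx : ‖x‖ = 1) (hy : ‖y‖ = 1) (z : V) :
    angle x z ≤ angle x y + angle y z := by
  rcases eq_or_ne z 0 with rfl | hz
  · rw [angle_zero_right, angle_zero_right]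
    linarith [angle_nonneg x y]
  · have hnz : (0 : ℝ) < ‖z‖ := norm_pos_iff.mpr hz
    have hzz : z = ‖z‖ • (‖z‖⁻¹ • z) := by
      rw [smul_smul, mul_inv_cancel₀ (ne_of_gt hnz), one_smul]
    have hunit : ‖(‖z‖⁻¹ • z)‖ = 1 := by
      rw [norm_smul, norm_inv, norm_norm, inv_mul_cancel₀ (ne_of_gt hnz)]
    calc angle x z = angle x (‖z‖ • (‖z‖⁻¹ • z)) := by rw [← hzz]
      _ = angle x (‖z‖⁻¹ • z) := angle_smul_right_of_pos _ _ hnz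
      _ ≤ angle x y + angle y (‖z‖⁻¹ • z) := angle_triangle_unit hx hy hunit
      _ = angle x y + angle y (‖z‖ • (‖z‖⁻¹ • z)) := by
          rw [angle_smul_right_of_pos _ _ hnz]
      _ = angle x y + angle y z := by rw [← hzz]

end Aux

open Classical in
theorem spcr_upper_bound_lower_hemisphere {I K : Type*} [Fintype I] [Fintype K]
    (p : I → EuclideanSpace ℝ (Fin 3)) (q : K → ℝ) (ε : ℝ) (hε : 0 ≤ ε)
    (rc : EuclideanSpace ℝ (Fin 3)) (hrc : ‖rc‖ = 1) (σ : ℝ) (hσ : 0 ≤ σ) :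
    ∀ r : EuclideanSpace ℝ (Fin 3), ‖r‖ = 1 → angle r rc ≤ Real.sqrt 2 * σ →
      ∀ t : ℝ,
        (Finset.univ.filter fun i => ∃ k : K, |⟪-r, p i⟫ + t - q k| ≤ ε).card ≤
          (Finset.univ.filter fun i => ∃ k : K,
            -ε + ‖p i‖ * Real.cos (min (angle rc (p i) + Real.sqrt 2 * σ) Real.pi) + q k ≤ t ∧
            t ≤ ε + ‖p i‖ * Real.cos (max (angle rc (p i) - Real.sqrt 2 * σ) 0) + q k).card := by
  intro r hr hangle t
  apply Finset.card_le_card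
  intro i hi
  simp only [Finset.mem_filter, Finset.mem_univ, true_and] at hi ⊢
  obtain ⟨k, hk⟩ := hi
  refine ⟨k, ?_, ?_⟩ <;>
  · rw [inner_neg_left, abs_le] at hk
    have hip : ⟪r, p i⟫ = ‖p i‖ * Real.cos (angle r (p i)) := by
      have := cos_angle_mul_norm_mul_norm r (p i)
      rw [hr] at this; linarith
    set A := angle r (p i) with hA
    set θ := angle rc (p i) with hθ
    have hA0 : 0 ≤ A := angle_nonneg r (p i)
    have hAπ : A ≤ Real.pi := angle_le_pi r (p i)
    have hθ0 : 0 ≤ θ := angle_nonneg rc (p i)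
    have hθπ : θ ≤ Real.pi := angle_le_pi rc (p i)
    have htri1 : A ≤ angle r rc + θ := angle_triangle_aux hr hrc (p i)
    have htri2 : θ ≤ angle rc r + A := angle_triangle_aux hrc hr (p i)
    rw [angle_comm rc r] at htri2
    have hub : A ≤ min (θ + Real.sqrt 2 * σ) Real.pi :=
      le_min (by linarith) hAπ
    have hlb : max (θ - Real.sqrt 2 * σ) 0 ≤ A :=
      max_le (by linarith) hA0
    have hcub : Real.cos (min (θ + Real.sqrt 2 * σ) Real.pi) ≤ Real.cos A :=
      Real.cos_le_cos_of_nonneg_of_le_pi hA0 (min_le_right _ _) hub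
    have hclb : Real.cos A ≤ Real.cos (max (θ - Real.sqrt 2 * σ) 0) :=
      Real.cos_le_cos_of_nonneg_of_le_pi (le_max_right _ _) hAπ hlb
    have hp0 : (0 : ℝ) ≤ ‖p i‖ := norm_nonneg _
    nlinarith [mul_le_mul_of_nonneg_left hcub hp0, mul_le_mul_of_nonneg_left hclb hp0]
end
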